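/- For every point x of the golden-ratio quasicrystal Λ_τ([0,τ/2)), at least one of the three shifted points x+τ, x+1+τ, x+1+2τ lies in Λ_τ([0,τ/2)). -/
import Mathlib


noncomputable def τ : ℝ := (1 + Real.sqrt 5) / 2
noncomputable def τ' : ℝ := (1 - Real.sqrt 5) / 2

noncomputable def Λ : Set ℝ :=
  {x : ℝ | ∃ a b : ℤ, x = a + b * τ ∧ ((a : ℝ) + b * τ') ∈ Set.Ico 0 (τ / 2)}

/-- For every point `x` of the golden-ratio quasicrystal `Λ_τ([0, τ/2))`,
at least one of `x + τ`, `x + 1 + τ`, `x + 1 + 2τ` lies in the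
quasicrystal. -/
theorem at_least_one_shift (x : ℝ) (hx : x ∈ Λ) :
    x + τ ∈ Λ ∨ x + (1 + τ) ∈ Λ ∨ x + (1 + 2 * τ) ∈ Λ := by
  obtain ⟨a, b, hxab, hy0, hyd⟩ := hx
  have hs : Real.sqrt 5 ^ 2 = 5 := Real.sq_sqrt (by norm_num)
  have hs2 : (2:ℝ) < Real.sqrt 5 := by nlinarith [Real.sqrt_nonneg 5]
  have hs3 : Real.sqrt 5 < 3 := by nlinarith [Real.sqrt_nonneg 5]
  set s := Real.sqrt 5 with hsdef
  unfold τ τ' at *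
  rcases lt_or_ge ((a:ℝ) + b * ((1-s)/2)) ((3*s-5)/4) with hB | hB
  · right; left
    refine ⟨a+1, b+1, by simp only [τ, τ']; push_cast; rw [hxab]; ring, ?_, ?_⟩
    · simp only [τ, τ'] ; push_cast; nlinarith
    · simp only [τ, τ'] ; push_cast; nlinarith
  · rcases le_or_gt ((s-1)/2) ((a:ℝ) + b * ((1-s)/2)) with hA | hA
    · left
      refine ⟨a, b+1, by simp only [τ, τ']; push_cast; rw [hxab]; ring, ?_, ?_⟩
      · simp only [τ, τ'] ; push_cast; nlinarith
      · simp only [τ, τ'] ; push_cast; nlinarith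
    · right; right
      refine ⟨a+1, b+2, by simp only [τ, τ']; push_cast; rw [hxab]; ring, ?_, ?_⟩
      · simp only [τ, τ'] ; push_cast; nlinarith
      · simp only [τ, τ'] ; push_cast; nlinarith
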